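/- arXiv:2204.02095 — 8 statements merged into one kernel-verified Lean document; each statement's English description precedes it below -/
import Mathlib

section
/- There exist universal constants c₁, c₂ > 0 (independent of d, P and f) such that for every dimension d ≥ 1, every finite nonempty set P ⊆ ℝ^d and every opening cost f > 0, c₁ · OPT(P, f) ≤ ∑_{p ∈ P} r_p ≤ c₂ · OPT(P, f). -/
/-!
The radius `r_p` grows with the mass `∑ₓ max (s - dist p x) 0` of the ball around `p`, which
makes `p ↦ r_p` 1-Lipschitz. For a cluster `C` of any solution, served by the facility `q` at
total connection cost `D`, the ball of radius `dist p q + (f + D) / |C|` around `p ∈ C` already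
has mass `f`, so `∑_{p ∈ C} r_p ≤ f + 2 D`; summing over clusters, `∑ r_p ≤ 2 · cost`.
Conversely, open greedily (in increasing order of `r`) a set `F ⊆ P` such that every `p` is
within `2 r_p` of `F` and the balls `B(q, r_q)`, `q ∈ F`, are pairwise disjoint. By the Lipschitz
property each such ball carries `∑ r_x ≥ f`, so this solution costs at most `3 ∑ r_p`.
-/

/-- The Uniform Facility Location cost of opening the (nonempty, finite) set of
facilities `F` for the set of clients `P`: every client connects to its nearest
facility, and each facility costs `f` to open. -/
noncomputable def uflCost (d : ℕ) (f : ℝ)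
    (P F : Finset (EuclideanSpace ℝ (Fin d))) : ℝ :=
  ∑ p ∈ P, Metric.infDist p (F : Set (EuclideanSpace ℝ (Fin d))) + f * F.card

/-- The optimal Uniform Facility Location cost: the infimum of `uflCost` over
all nonempty finite facility sets `F ⊆ ℝ^d`. -/
noncomputable def uflOPT (d : ℕ) (f : ℝ)
    (P : Finset (EuclideanSpace ℝ (Fin d))) : ℝ :=
  sInf {c : ℝ | ∃ F : Finset (EuclideanSpace ℝ (Fin d)), F.Nonempty ∧ c = uflCost d f P F}

open Finset Metric

namespace FacilityLocation

variable {α : Type*} [PseudoMetricSpace α]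

def ballValue (P : Finset α) (p : α) (s : ℝ) : ℝ := ∑ x ∈ P, max (s - dist p x) 0

lemma ballValue_le_ballValue {P : Finset α} {p q : α} {s t : ℝ}
    (h : ∀ x ∈ P, s - dist p x ≤ t - dist q x) : ballValue P p s ≤ ballValue P q t :=
  sum_le_sum fun x hx => max_le_max (h x hx) le_rfl

lemma ballValue_lt_ballValue {P : Finset α} {p : α} (hp : p ∈ P) {s t : ℝ} (ht : 0 < t)
    (hst : s < t) : ballValue P p s < ballValue P p t := by
  refine sum_lt_sum (fun x _ => max_le_max (by linarith) le_rfl) ⟨p, hp, ?_⟩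
  simp only [dist_self, sub_zero]
  exact max_lt (hst.trans_le (le_max_left _ _)) (ht.trans_le (le_max_left _ _))

/-- `r` restricted to `P` is the family of radii `r_p` determined by the opening cost `f`. -/
def IsFacilityRadii (P : Finset α) (f : ℝ) (r : α → ℝ) : Prop :=
  ∀ p ∈ P, 0 < r p ∧ ballValue P p (r p) = f

lemma exists_separated_cover (r : α → ℝ) (S : Finset α) (hS : ∀ p ∈ S, 0 ≤ r p) :
    ∃ F ⊆ S, (∀ p ∈ S, ∃ q ∈ F, dist p q ≤ 2 * r p) ∧
      (F : Set α).Pairwise fun q q' => r q + r q' < dist q q' := by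
  classical
  induction S using Finset.induction_on_max_value r with
  | empty => exact ⟨∅, subset_rfl, by simp, by simp⟩
  | insert a S _ hmax ih =>
    obtain ⟨F, hFS, hcover, hsep⟩ := ih fun p hp => hS p (mem_insert_of_mem hp)
    by_cases hnear : ∃ q ∈ F, dist a q ≤ 2 * r a
    · exact ⟨F, hFS.trans (subset_insert _ _), forall_mem_insert _ _ _ |>.2 ⟨hnear, hcover⟩, hsep⟩
    · push Not at hnear
      refine ⟨insert a F, insert_subset_insert _ hFS, forall_mem_insert _ _ _ |>.2 ⟨?_, ?_⟩, ?_⟩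
      · exact ⟨a, mem_insert_self _ _, by
          rw [dist_self]; linarith [hS a (mem_insert_self _ _)]⟩
      · intro p hp
        obtain ⟨q, hq, hpq⟩ := hcover p hp
        exact ⟨q, mem_insert_of_mem hq, hpq⟩
      · rw [coe_insert]
        refine hsep.insert fun q hq _ => ?_
        have hqa : r q ≤ r a := hmax q (hFS hq)
        have hfar := hnear q hq
        exact ⟨by linarith, by rw [dist_comm]; linarith⟩

namespace IsFacilityRadii

variable {P : Finset α} {f : ℝ} {r : α → ℝ}

lemma le_of_le_ballValue (hr : IsFacilityRadii P f r) {p : α} (hp : p ∈ P) {s : ℝ}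
    (h : f ≤ ballValue P p s) : r p ≤ s :=
  le_of_not_gt fun hs => (h.trans_lt (ballValue_lt_ballValue hp (hr p hp).1 hs)).ne' (hr p hp).2

lemma le_add_dist (hr : IsFacilityRadii P f r) {p q : α} (hp : p ∈ P) (hq : q ∈ P) :
    r p ≤ r q + dist p q :=
  hr.le_of_le_ballValue hp <| (hr q hq).2.symm.le.trans <|
    ballValue_le_ballValue fun x _ => by linarith [dist_triangle p q x]

lemma le_dist_add_average (hr : IsFacilityRadii P f r) {S : Finset α} (hSP : S ⊆ P)
    (hS : S.Nonempty) (q : α) {p : α} (hp : p ∈ P) :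
    r p ≤ dist p q + (f + ∑ x ∈ S, dist x q) / #S := by
  have hcard : (0 : ℝ) < #S := by exact_mod_cast hS.card_pos
  apply hr.le_of_le_ballValue hp
  calc f = ∑ x ∈ S, ((f + ∑ y ∈ S, dist y q) / #S - dist x q) := by
        rw [sum_sub_distrib, sum_const, nsmul_eq_mul, mul_div_cancel₀ _ hcard.ne']; ring
    _ ≤ ∑ x ∈ S, max (dist p q + (f + ∑ y ∈ S, dist y q) / #S - dist p x) 0 :=
        sum_le_sum fun x _ => le_max_of_le_left (by linarith [dist_triangle p q x, dist_comm q x])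
    _ ≤ ballValue P p (dist p q + (f + ∑ y ∈ S, dist y q) / #S) :=
        sum_le_sum_of_subset_of_nonneg hSP fun _ _ _ => le_max_right _ _

lemma sum_le_add_two_mul_sum_dist (hr : IsFacilityRadii P f r) (hf : 0 ≤ f) {S : Finset α}
    (hSP : S ⊆ P) (q : α) : ∑ p ∈ S, r p ≤ f + 2 * ∑ p ∈ S, dist p q := by
  rcases S.eq_empty_or_nonempty with rfl | hS
  · simpa using hf
  have hcard : (0 : ℝ) < #S := by exact_mod_cast hS.card_pos
  calc ∑ p ∈ S, r p ≤ ∑ p ∈ S, (dist p q + (f + ∑ x ∈ S, dist x q) / #S) :=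
        sum_le_sum fun p hp => hr.le_dist_add_average hSP hS q (hSP hp)
    _ = f + 2 * ∑ p ∈ S, dist p q := by
        rw [sum_add_distrib, sum_const, nsmul_eq_mul, mul_div_cancel₀ _ hcard.ne']; ring

lemma sum_le_two_mul_cost (hr : IsFacilityRadii P f r) (hf : 0 ≤ f) {F : Finset α}
    (hF : F.Nonempty) :
    ∑ p ∈ P, r p ≤ 2 * (∑ p ∈ P, infDist p (F : Set α) + f * #F) := by
  classical
  have hnearest (p : α) : ∃ q ∈ F, infDist p (F : Set α) = dist p q :=
    F.finite_toSet.isCompact.exists_infDist_eq_dist (coe_nonempty.2 hF) p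
  choose n hnF hn using hnearest
  have hclusters : ∑ q ∈ F, ∑ p ∈ P with n p = q, dist p q = ∑ p ∈ P, infDist p (F : Set α) := by
    rw [← sum_fiberwise_of_maps_to (fun p _ => hnF p) fun p => infDist p (F : Set α)]
    refine sum_congr rfl fun q _ => sum_congr rfl fun p hp => ?_
    rw [hn, (mem_filter.1 hp).2]
  calc ∑ p ∈ P, r p = ∑ q ∈ F, ∑ p ∈ P with n p = q, r p :=
        (sum_fiberwise_of_maps_to (fun p _ => hnF p) _).symm
    _ ≤ ∑ q ∈ F, (f + 2 * ∑ p ∈ P with n p = q, dist p q) :=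
        sum_le_sum fun q _ => hr.sum_le_add_two_mul_sum_dist hf (filter_subset _ _) q
    _ = f * #F + 2 * ∑ p ∈ P, infDist p (F : Set α) := by
        rw [sum_add_distrib, sum_const, nsmul_eq_mul, ← mul_sum, hclusters, mul_comm]
    _ ≤ 2 * (∑ p ∈ P, infDist p (F : Set α) + f * #F) := by
        nlinarith [mul_nonneg hf (Nat.cast_nonneg (α := ℝ) #F)]

lemma le_sum_filter_dist_le (hr : IsFacilityRadii P f r) {q : α} (hq : q ∈ P) :
    f ≤ ∑ x ∈ P with dist q x ≤ r q, r x := by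
  rw [sum_filter, ← (hr q hq).2]
  refine sum_le_sum fun x hx => ?_
  split_ifs with hd
  · exact max_le (by linarith [hr.le_add_dist hq hx]) (hr x hx).1.le
  · exact max_le (by linarith) le_rfl

lemma mul_card_le_sum (hr : IsFacilityRadii P f r) {F : Finset α} (hFP : F ⊆ P)
    (hsep : (F : Set α).Pairwise fun q q' => r q + r q' < dist q q') :
    f * #F ≤ ∑ p ∈ P, r p := by
  classical
  have hdisj : (F : Set α).PairwiseDisjoint fun q => {x ∈ P | dist q x ≤ r q} := by
    intro q hq q' hq' hne
    refine disjoint_left.2 fun x hx hx' => ?_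
    linarith [hsep hq hq' hne, (mem_filter.1 hx).2, (mem_filter.1 hx').2,
      dist_triangle q x q', dist_comm x q']
  calc f * #F = ∑ q ∈ F, f := by rw [sum_const, nsmul_eq_mul, mul_comm]
    _ ≤ ∑ q ∈ F, ∑ x ∈ P with dist q x ≤ r q, r x :=
        sum_le_sum fun q hq => hr.le_sum_filter_dist_le (hFP hq)
    _ = ∑ x ∈ F.biUnion fun q => {x ∈ P | dist q x ≤ r q}, r x := (sum_biUnion hdisj).symm
    _ ≤ ∑ p ∈ P, r p :=
        sum_le_sum_of_subset_of_nonneg (biUnion_subset.2 fun _ _ => filter_subset _ _)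
          fun x hx _ => (hr x hx).1.le

lemma exists_cost_le_three_mul_sum (hr : IsFacilityRadii P f r) (hP : P.Nonempty) :
    ∃ F : Finset α, F.Nonempty ∧
      ∑ p ∈ P, infDist p (F : Set α) + f * #F ≤ 3 * ∑ p ∈ P, r p := by
  obtain ⟨F, hFP, hcover, hsep⟩ := exists_separated_cover r P fun p hp => (hr p hp).1.le
  obtain ⟨p₀, hp₀⟩ := hP
  obtain ⟨q₀, hq₀, -⟩ := hcover p₀ hp₀
  have hconn : ∑ p ∈ P, infDist p (F : Set α) ≤ ∑ p ∈ P, 2 * r p :=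
    sum_le_sum fun p hp => by
      obtain ⟨q, hq, hpq⟩ := hcover p hp
      exact (infDist_le_dist_of_mem (mem_coe.2 hq)).trans hpq
  rw [← mul_sum] at hconn
  exact ⟨F, ⟨q₀, hq₀⟩, by linarith [hr.mul_card_le_sum hFP hsep]⟩

end IsFacilityRadii

end FacilityLocation

open FacilityLocation

lemma uflCost_nonneg {d : ℕ} {f : ℝ} (hf : 0 ≤ f) (P F : Finset (EuclideanSpace ℝ (Fin d))) :
    0 ≤ uflCost d f P F :=
  add_nonneg (sum_nonneg fun _ _ => infDist_nonneg) (by positivity)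

lemma uflOPT_le_uflCost {d : ℕ} {f : ℝ} (hf : 0 ≤ f) {P F : Finset (EuclideanSpace ℝ (Fin d))}
    (hF : F.Nonempty) : uflOPT d f P ≤ uflCost d f P F :=
  csInf_le ⟨0, by rintro _ ⟨G, -, rfl⟩; exact uflCost_nonneg hf P G⟩ ⟨F, hF, rfl⟩

lemma le_uflOPT {d : ℕ} {f a : ℝ} {P : Finset (EuclideanSpace ℝ (Fin d))}
    (h : ∀ F : Finset (EuclideanSpace ℝ (Fin d)), F.Nonempty → a ≤ uflCost d f P F) :
    a ≤ uflOPT d f P :=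
  le_csInf ⟨_, {0}, singleton_nonempty 0, rfl⟩ (by rintro _ ⟨F, hF, rfl⟩; exact h F hF)

/-- There are universal constants `c₁, c₂ > 0` such that for
every dimension `d ≥ 1`, every finite nonempty `P ⊆ ℝ^d` and opening cost
`f > 0`, with `r p = r_p` the unique positive root of
`∑_{x ∈ P} max (r − dist p x) 0 = f`, one has
`c₁ · OPT(P, f) ≤ ∑_{p ∈ P} r_p ≤ c₂ · OPT(P, f)`. -/
theorem stmt_3 :
    ∃ c₁ c₂ : ℝ, 0 < c₁ ∧ 0 < c₂ ∧
      ∀ (d : ℕ), 1 ≤ d →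
      ∀ (P : Finset (EuclideanSpace ℝ (Fin d))), P.Nonempty →
      ∀ f : ℝ, 0 < f →
      ∀ r : EuclideanSpace ℝ (Fin d) → ℝ,
        (∀ p ∈ P, 0 < r p ∧ ∑ x ∈ P, max (r p - dist p x) 0 = f) →
        c₁ * uflOPT d f P ≤ ∑ p ∈ P, r p ∧ ∑ p ∈ P, r p ≤ c₂ * uflOPT d f P := by
  refine ⟨1 / 3, 2, by norm_num, by norm_num, fun d _ P hP f hf r hr => ⟨?_, ?_⟩⟩
  · obtain ⟨F, hF, hcost⟩ := IsFacilityRadii.exists_cost_le_three_mul_sum hr hP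
    linarith [(uflOPT_le_uflCost (P := P) hf.le hF).trans hcost]
  · have : (∑ p ∈ P, r p) / 2 ≤ uflOPT d f P := le_uflOPT fun F hF => by
      have := IsFacilityRadii.sum_le_two_mul_cost hr hf.le hF
      unfold uflCost
      linarith
    linarith
end

section
/- Let d ≥ 1, let P ⊆ ℝ^d be finite and nonempty, let f > 0, let p ∈ P, and let L be an integer with 2^L ≥ |P|. Let j₀ be the maximum j ∈ {0, 1, …, L} such that |P ∩ B(p, 2^{−j} f)| ≥ 2^j (this maximum exists since j = 0 qualifies). Then 2^{−j₀−1} f < r_p ≤ 2^{−j₀+1} f. -/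
/-- With `r = r_p` the unique positive root of
`∑_{x ∈ P} max (r − dist p x) 0 = f`, and `L` an integer with `2^L ≥ |P|`:
if `j₀` is the maximum `j ∈ {0, …, L}` with `|P ∩ B(p, 2^{−j} f)| ≥ 2^j`,
then `2^{−j₀−1} f < r_p ≤ 2^{−j₀+1} f`. -/
theorem stmt_4 (d : ℕ) (hd : 1 ≤ d)
    (P : Finset (EuclideanSpace ℝ (Fin d))) (hP : P.Nonempty)
    (f : ℝ) (hf : 0 < f)
    (p : EuclideanSpace ℝ (Fin d)) (hp : p ∈ P)
    (r : ℝ) (hr : 0 < r) (hreq : ∑ x ∈ P, max (r - dist p x) 0 = f)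
    (L : ℕ) (hL : P.card ≤ 2 ^ L)
    (j₀ : ℕ) (hj₀L : j₀ ≤ L)
    (hj₀ : 2 ^ j₀ ≤ (P.filter (fun x => dist p x ≤ (2 : ℝ) ^ (-(j₀ : ℤ)) * f)).card)
    (hmax : ∀ j : ℕ, j ≤ L → j₀ < j →
      (P.filter (fun x => dist p x ≤ (2 : ℝ) ^ (-(j : ℤ)) * f)).card < 2 ^ j) :
    (2 : ℝ) ^ (-(j₀ : ℤ) - 1) * f < r ∧ r ≤ (2 : ℝ) ^ (-(j₀ : ℤ) + 1) * f := by
  have h2 : (2:ℝ) ≠ 0 := two_ne_zero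
  constructor
  · -- lower bound
    by_contra hcon
    push_neg at hcon
    set t : ℝ := (2:ℝ) ^ (-(j₀:ℤ) - 1) * f with ht
    have htpos : 0 < t := by positivity
    have hsum : f ≤ ((P.filter (fun x => dist p x ≤ t)).card : ℝ) * r := by
      rw [← hreq]
      calc ∑ x ∈ P, max (r - dist p x) 0
          ≤ ∑ x ∈ P, (if dist p x ≤ t then r else 0) := by
            apply Finset.sum_le_sum
            intro x hx
            by_cases hdx : dist p x ≤ t
            · simp only [hdx, if_true]
              exact max_le (by linarith [dist_nonneg (x := p) (y := x)]) hr.le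
            · simp only [hdx, if_false]
              push_neg at hdx
              exact max_le (by linarith) le_rfl
        _ = ((P.filter (fun x => dist p x ≤ t)).card : ℝ) * r := by
            rw [← Finset.sum_filter, Finset.sum_const, nsmul_eq_mul]
    rcases lt_or_eq_of_le hj₀L with hlt | heq
    · have hm := hmax (j₀ + 1) hlt (Nat.lt_succ_self j₀)
      have hcast : (-(((j₀ + 1 : ℕ)) : ℤ)) = -(j₀:ℤ) - 1 := by push_cast; ring
      rw [hcast] at hm
      have hcard : ((P.filter (fun x => dist p x ≤ t)).card : ℝ) ≤ 2 ^ (j₀ + 1) - 1 := by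
        have : (P.filter (fun x => dist p x ≤ t)).card ≤ 2 ^ (j₀ + 1) - 1 :=
          Nat.le_sub_one_of_lt hm
        have h1 : (1:ℕ) ≤ 2 ^ (j₀ + 1) := Nat.one_le_two_pow
        calc ((P.filter (fun x => dist p x ≤ t)).card : ℝ)
            ≤ ((2 ^ (j₀ + 1) - 1 : ℕ) : ℝ) := by exact_mod_cast this
          _ = 2 ^ (j₀ + 1) - 1 := by push_cast [h1]; ring
      have hpow : (2:ℝ) ^ (j₀ + 1) * ((2:ℝ) ^ (-(j₀:ℤ) - 1)) = 1 := by
        rw [show ((2:ℝ) ^ (j₀ + 1) : ℝ) = (2:ℝ) ^ ((j₀:ℤ) + 1) by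
          rw [← zpow_natCast]; push_cast; ring_nf]
        rw [← zpow_add₀ h2]
        norm_num
      have hprod : ((P.filter (fun x => dist p x ≤ t)).card : ℝ) * r
          ≤ (2 ^ (j₀ + 1) - 1) * t := by
        apply mul_le_mul hcard hcon hr.le
        have : (0:ℝ) < 2 ^ (j₀ + 1) := by positivity
        nlinarith [Nat.one_le_two_pow (n := j₀ + 1)]
      have : (2 ^ (j₀ + 1) - 1 : ℝ) * t = f - t := by
        rw [ht]; nlinarith [hpow]
      linarith
    · subst heq
      have hcard : ((P.filter (fun x => dist p x ≤ t)).card : ℝ) ≤ (2:ℝ) ^ j₀ := by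
        have h1 : (P.filter (fun x => dist p x ≤ t)).card ≤ P.card :=
          Finset.card_filter_le _ _
        have : (P.filter (fun x => dist p x ≤ t)).card ≤ 2 ^ j₀ := le_trans h1 hL
        exact_mod_cast this
      have hpow : (2:ℝ) ^ j₀ * ((2:ℝ) ^ (-(j₀:ℤ) - 1)) = 1 / 2 := by
        rw [show ((2:ℝ) ^ j₀ : ℝ) = (2:ℝ) ^ (j₀:ℤ) by rw [← zpow_natCast]]
        rw [← zpow_add₀ h2, show (j₀:ℤ) + (-(j₀:ℤ) - 1) = -1 by ring]
        norm_num
      have hprod : ((P.filter (fun x => dist p x ≤ t)).card : ℝ) * r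
          ≤ (2:ℝ) ^ j₀ * t := by
        apply mul_le_mul hcard hcon hr.le (by positivity)
      have : (2:ℝ) ^ j₀ * t = f / 2 := by rw [ht]; nlinarith [hpow]
      linarith
  · -- upper bound
    by_contra hcon
    push_neg at hcon
    set s : ℝ := (2:ℝ) ^ (-(j₀:ℤ)) * f with hs
    have hspos : 0 < s := by positivity
    have hdouble : (2:ℝ) ^ (-(j₀:ℤ) + 1) * f = 2 * s := by
      rw [hs, zpow_add₀ h2]
      ring
    rw [hdouble] at hcon
    have hrs : s < r - s := by linarith
    have hsum : ((P.filter (fun x => dist p x ≤ s)).card : ℝ) * (r - s) ≤ f := by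
      rw [← hreq]
      calc ((P.filter (fun x => dist p x ≤ s)).card : ℝ) * (r - s)
          = ∑ _x ∈ P.filter (fun x => dist p x ≤ s), (r - s) := by
            rw [Finset.sum_const, nsmul_eq_mul]
        _ ≤ ∑ x ∈ P.filter (fun x => dist p x ≤ s), max (r - dist p x) 0 := by
            apply Finset.sum_le_sum
            intro x hx
            rw [Finset.mem_filter] at hx
            exact le_trans (by linarith [hx.2]) (le_max_left _ _)
        _ ≤ ∑ x ∈ P, max (r - dist p x) 0 := by
            apply Finset.sum_le_sum_of_subset_of_nonneg (Finset.filter_subset _ _)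
            intro x _ _
            exact le_max_right _ _
    have hcard : (2:ℝ) ^ j₀ ≤ ((P.filter (fun x => dist p x ≤ s)).card : ℝ) := by
      exact_mod_cast hj₀
    have hpow : (2:ℝ) ^ j₀ * ((2:ℝ) ^ (-(j₀:ℤ))) = 1 := by
      rw [show ((2:ℝ) ^ j₀ : ℝ) = (2:ℝ) ^ (j₀:ℤ) by rw [← zpow_natCast]]
      rw [← zpow_add₀ h2]
      norm_num
    have hbig : f < (2:ℝ) ^ j₀ * (r - s) := by
      have : (2:ℝ) ^ j₀ * s = f := by rw [hs]; nlinarith [hpow]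
      nlinarith [hspos]
    have : (2:ℝ) ^ j₀ * (r - s) ≤ ((P.filter (fun x => dist p x ≤ s)).card : ℝ) * (r - s) := by
      apply mul_le_mul_of_nonneg_right hcard (by linarith)
    linarith
end

section
/- Let d ≥ 1, let P ⊆ ℝ^d be finite and nonempty, let f > 0, and let φ : ℝ^d → ℝ^d be a map such that for every z in the image of φ the Euclidean diameter of the fiber φ^{−1}(z) is at most ℓ. If p ∈ P satisfies r_p ≥ 2ℓ, then the bucket of p contains at most 2f/r_p points of P, i.e., |φ^{−1}(φ(p)) ∩ P| ≤ 2f / r_p. -/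
open scoped Classical

/-- With `r = r_p` the unique positive root of
`∑_{x ∈ P} max (r − dist p x) 0 = f`: if `φ : ℝ^d → ℝ^d` has all fibers of
Euclidean diameter at most `ℓ` and `r_p ≥ 2ℓ`, then the bucket of `p` contains
at most `2 f / r_p` points of `P`. -/
theorem stmt_6 (d : ℕ) (hd : 1 ≤ d)
    (P : Finset (EuclideanSpace ℝ (Fin d))) (hP : P.Nonempty)
    (f : ℝ) (hf : 0 < f)
    (p : EuclideanSpace ℝ (Fin d)) (hp : p ∈ P)
    (r : ℝ) (hr : 0 < r) (hreq : ∑ x ∈ P, max (r - dist p x) 0 = f)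
    (φ : EuclideanSpace ℝ (Fin d) → EuclideanSpace ℝ (Fin d)) (ℓ : ℝ)
    (hdiam : ∀ z ∈ Set.range φ, EMetric.diam (φ ⁻¹' {z}) ≤ ENNReal.ofReal ℓ)
    (hrℓ : 2 * ℓ ≤ r) :
    ((P.filter (fun x => φ x = φ p)).card : ℝ) ≤ 2 * f / r := by
  set S := P.filter (fun x => φ x = φ p) with hS
  have hkey : ∀ x ∈ S, r / 2 ≤ max (r - dist p x) 0 := by
    intro x hx
    have hx' : φ x = φ p := (Finset.mem_filter.mp hx).2
    have hmemx : x ∈ φ ⁻¹' {φ p} := by simp [hx']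
    have hmemp : p ∈ φ ⁻¹' {φ p} := by simp
    have hed : edist p x ≤ EMetric.diam (φ ⁻¹' {φ p}) :=
      EMetric.edist_le_diam_of_mem hmemp hmemx
    have hed2 : edist p x ≤ ENNReal.ofReal ℓ :=
      hed.trans (hdiam (φ p) ⟨p, rfl⟩)
    have hdist : dist p x ≤ max ℓ 0 := by
      have h := ENNReal.toReal_mono (by simp) hed2
      rw [dist_edist]
      calc (edist p x).toReal ≤ (ENNReal.ofReal ℓ).toReal := h
        _ ≤ max ℓ 0 := by
            rcases le_or_gt 0 ℓ with h0 | h0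
            · simp [ENNReal.toReal_ofReal h0, le_max_left]
            · simp [ENNReal.ofReal_eq_zero.mpr h0.le]
    have h1 : dist p x ≤ r / 2 := hdist.trans (max_le (by linarith) (by linarith))
    have : r / 2 ≤ r - dist p x := by linarith
    exact this.trans (le_max_left _ _)
  have hsub : ∑ x ∈ S, max (r - dist p x) 0 ≤ f := by
    rw [← hreq]
    exact Finset.sum_le_sum_of_subset_of_nonneg (Finset.filter_subset _ _)
      (fun x _ _ => le_max_right _ _)
  have hcard : (S.card : ℝ) * (r / 2) ≤ f := by
    calc (S.card : ℝ) * (r / 2) = ∑ _x ∈ S, r / 2 := by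
          simp [Finset.sum_const, mul_comm]
      _ ≤ ∑ x ∈ S, max (r - dist p x) 0 := Finset.sum_le_sum hkey
      _ ≤ f := hsub
  rw [le_div_iff₀ hr]
  nlinarith [hcard]
end

section
/- There exists a universal constant c > 0 such that for every dimension d ≥ 1 and every ℓ > 0 there exists a map φ : ℝ^d → ℝ^d that is a (c·d^{3/2}, d+1)-hash with diameter bound ℓ; that is, every fiber φ^{−1}(z) has Euclidean diameter at most ℓ, and every set S ⊆ ℝ^d of Euclidean diameter at most ℓ/(c·d^{3/2}) satisfies |φ(S)| ≤ d + 1. -/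
/-!
Divide by `ℓ/√d`, so that a unit cube has diameter `ℓ`, and round the coordinates one at a time
with a drifting offset: the `n`-th digit is `⌊xₙ + Σₙ/(d+1)⌋`, where `Σₙ` is the sum of the
previous digits. Equal digits force every coordinate into a unit interval, which bounds the
fibres. For two points whose rescaled coordinates differ by at most `1/(d+1)` (as they do on a set
of diameter `ℓ/(2d^{3/2})`), the partial sums of digits either agree together with all digits so
far, or, from the first disagreement on, their difference keeps one sign and grows by at most one
per coordinate, never wrapping around because of the offset. Hence on a small set the total digit
sum determines the digits and takes at most `d + 1` consecutive values.
-/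

open Finset

lemma Int.floor_le_floor_add_one_of_le_add_one {R : Type*} [Ring R] [LinearOrder R]
    [IsStrictOrderedRing R] [FloorRing R] {u v : R} (h : u ≤ v + 1) : ⌊u⌋ ≤ ⌊v⌋ + 1 := by
  simpa [Int.floor_add_one] using Int.floor_mono h

lemma Set.finite_and_ncard_le_of_forall_abs_sub_le {A : Set ℤ} {n : ℕ}
    (h : ∀ a ∈ A, ∀ b ∈ A, |a - b| ≤ n) : A.Finite ∧ A.ncard ≤ n + 1 := by
  rcases A.eq_empty_or_nonempty with rfl | ⟨a₀, ha₀⟩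
  · simp
  have hfin : A.Finite := (Set.finite_Icc (a₀ - n) (a₀ + n)).subset fun a ha => by
    have := abs_le.mp (h a ha a₀ ha₀)
    exact ⟨by linarith [this.1], by linarith [this.2]⟩
  obtain ⟨m, hm, hmin⟩ := Set.exists_min_image A id hfin ⟨a₀, ha₀⟩
  have hsub : A ⊆ Set.Icc m (m + n) := fun a ha =>
    ⟨hmin a ha, by linarith [(abs_le.mp (h a ha m hm)).2]⟩
  refine ⟨hfin, (Set.ncard_le_ncard hsub (Set.finite_Icc _ _)).trans ?_⟩
  rw [← Finset.coe_Icc, Set.ncard_coe_finset, Int.card_Icc]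
  omega

lemma dist_le_sqrt_card_mul_of_forall_dist_apply_le {ι : Type*} [Fintype ι]
    {x y : EuclideanSpace ℝ ι} {r : ℝ} (hr : 0 ≤ r) (h : ∀ i, dist (x i) (y i) ≤ r) :
    dist x y ≤ √(Fintype.card ι) * r := by
  rw [EuclideanSpace.dist_eq, ← Real.sqrt_sq hr, ← Real.sqrt_mul (Nat.cast_nonneg _)]
  gcongr
  calc ∑ i, dist (x i) (y i) ^ 2 ≤ ∑ _i : ι, r ^ 2 :=
        Finset.sum_le_sum fun i _ => pow_le_pow_left₀ dist_nonneg (h i) 2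
    _ = Fintype.card ι * r ^ 2 := by simp

namespace Staircase

variable (D : ℕ)

noncomputable def partialSum (x : ℕ → ℝ) : ℕ → ℤ
  | 0 => 0
  | n + 1 => partialSum x n + ⌊x n + partialSum x n / (D + 1)⌋

noncomputable def digit (x : ℕ → ℝ) (n : ℕ) : ℤ := ⌊x n + partialSum D x n / (D + 1)⌋

variable {D} {x z : ℕ → ℝ} {n : ℕ}

lemma partialSum_succ : partialSum D x (n + 1) = partialSum D x n + digit D x n := rfl

lemma partialSum_eq_sum_digit : partialSum D x n = ∑ m ∈ range n, digit D x m := by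
  induction n with
  | zero => rfl
  | succ n ih => rw [partialSum_succ, ih, sum_range_succ]

lemma partialSum_eq_of_digit_eq (h : ∀ m < n, digit D x m = digit D z m) :
    partialSum D x n = partialSum D z n := by
  simp only [partialSum_eq_sum_digit]
  exact sum_congr rfl fun m hm => h m (mem_range.mp hm)

lemma abs_sub_lt_one_of_digit_eq (h : ∀ m ≤ n, digit D x m = digit D z m) :
    |x n - z n| < 1 := by
  have hsum := partialSum_eq_of_digit_eq fun m hm => h m hm.le
  have hfloor := h n le_rfl
  rw [digit, digit, hsum] at hfloor
  simpa using Int.abs_sub_lt_one_of_floor_eq_floor hfloor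

lemma abs_digit_sub_le_one_of_partialSum_eq (h : partialSum D x n = partialSum D z n)
    (hxz : |x n - z n| ≤ 1) : |digit D x n - digit D z n| ≤ 1 := by
  have := abs_le.mp hxz
  rw [digit, digit, h, abs_le]
  constructor
  · linarith [Int.floor_le_floor_add_one_of_le_add_one
      (show z n + partialSum D z n / (D + 1) ≤ x n + partialSum D z n / (D + 1) + 1 by linarith)]
  · linarith [Int.floor_le_floor_add_one_of_le_add_one
      (show x n + partialSum D z n / (D + 1) ≤ z n + partialSum D z n / (D + 1) + 1 by linarith)]

/-- The offsets differ by `δ/(D+1) ∈ [1/(D+1), 1 - 1/(D+1)]`, which absorbs a coordinate gap of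
`1/(D+1)`, so the rounded arguments differ by an amount in `[0, 1]`. -/
lemma digit_sub_digit_mem_of_one_le_partialSum_sub
    (h₁ : 1 ≤ partialSum D x n - partialSum D z n)
    (h₂ : partialSum D x n - partialSum D z n + 1 ≤ D) (hxz : |x n - z n| ≤ 1 / (D + 1)) :
    0 ≤ digit D x n - digit D z n ∧ digit D x n - digit D z n ≤ 1 := by
  set δ := partialSum D x n - partialSum D z n with hδ
  have hD : (0 : ℝ) < D + 1 := by positivity
  have hδ₁ : (1 : ℝ) ≤ δ := by exact_mod_cast h₁
  have hδ₂ : (δ : ℝ) + 1 ≤ D := by exact_mod_cast h₂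
  have hgap : x n + partialSum D x n / (D + 1) - (z n + partialSum D z n / (D + 1))
      = x n - z n + δ / (D + 1) := by
    rw [hδ]; push_cast; ring
  have hlow : 1 / (D + 1) ≤ (δ : ℝ) / (D + 1) := by gcongr
  have hhigh : (δ : ℝ) / (D + 1) + 1 / (D + 1) ≤ 1 := by
    rw [← add_div, div_le_one hD]; linarith
  have hxz' := abs_le.mp hxz
  constructor
  · have := Int.floor_mono (show z n + partialSum D z n / (D + 1)
      ≤ x n + partialSum D x n / (D + 1) by linarith)
    rw [digit, digit]; linarith
  · have := Int.floor_le_floor_add_one_of_le_add_one (show x n + partialSum D x n / (D + 1)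
      ≤ z n + partialSum D z n / (D + 1) + 1 by linarith)
    rw [digit, digit]; linarith

lemma one_le_partialSum_sub_succ (hn : n + 1 ≤ D)
    (h₁ : 1 ≤ partialSum D x n - partialSum D z n) (h₂ : partialSum D x n - partialSum D z n ≤ n)
    (hxz : |x n - z n| ≤ 1 / (D + 1)) :
    1 ≤ partialSum D x (n + 1) - partialSum D z (n + 1) ∧
      partialSum D x (n + 1) - partialSum D z (n + 1) ≤ (n + 1 : ℕ) := by
  obtain ⟨hk₁, hk₂⟩ := digit_sub_digit_mem_of_one_le_partialSum_sub h₁ (by omega) hxz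
  rw [partialSum_succ, partialSum_succ]
  push_cast
  constructor <;> linarith

theorem partialSum_separation (hxz : ∀ n < D, |x n - z n| ≤ 1 / (D + 1)) (hn : n ≤ D) :
    |partialSum D x n - partialSum D z n| ≤ n ∧
      (partialSum D x n = partialSum D z n → ∀ m < n, digit D x m = digit D z m) := by
  have hD : (1 : ℝ) / (D + 1) ≤ 1 := by
    rw [div_le_one (by positivity)]; linarith [(Nat.cast_nonneg D : (0 : ℝ) ≤ D)]
  induction n with
  | zero => simp [partialSum]
  | succ n ih =>
    obtain ⟨hbound, hagree⟩ := ih (by omega)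
    have hxzn := hxz n (by omega)
    by_cases hsum : partialSum D x n = partialSum D z n
    · have hk := abs_digit_sub_le_one_of_partialSum_eq hsum (hxzn.trans hD)
      refine ⟨?_, fun hsucc m hm => ?_⟩
      · rw [partialSum_succ, partialSum_succ, hsum, add_sub_add_left_eq_sub]
        push_cast; linarith
      · rw [partialSum_succ, partialSum_succ, hsum, add_right_inj] at hsucc
        rcases Nat.lt_succ_iff_lt_or_eq.mp hm with hm | rfl
        exacts [hagree hsum m hm, hsucc]
    · have hpos := abs_pos.mpr (sub_ne_zero.mpr hsum)
      have hstep : 1 ≤ |partialSum D x (n + 1) - partialSum D z (n + 1)| ∧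
          |partialSum D x (n + 1) - partialSum D z (n + 1)| ≤ (n + 1 : ℕ) := by
        rcases le_or_gt 0 (partialSum D x n - partialSum D z n) with hle | hlt
        · rw [abs_of_nonneg hle] at hpos hbound
          obtain ⟨h₁, h₂⟩ := one_le_partialSum_sub_succ (by omega) (by omega) hbound hxzn
          rw [abs_of_pos (by omega)]
          exact ⟨h₁, h₂⟩
        · rw [abs_of_neg hlt] at hpos hbound
          obtain ⟨h₁, h₂⟩ := one_le_partialSum_sub_succ (x := z) (z := x) (by omega) (by omega)
            (by omega) (by rwa [abs_sub_comm])
          rw [abs_sub_comm, abs_of_pos (by omega)]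
          exact ⟨h₁, h₂⟩
      refine ⟨hstep.2, fun hsucc => ?_⟩
      rw [hsucc, sub_self, abs_zero] at hstep
      omega

end Staircase

open Staircase

section Hash

variable {d : ℕ} {s : ℝ}

noncomputable def scaledCoords (s : ℝ) (x : EuclideanSpace ℝ (Fin d)) (n : ℕ) : ℝ :=
  if h : n < d then x ⟨n, h⟩ / s else 0

noncomputable def staircaseHash (s : ℝ) (x : EuclideanSpace ℝ (Fin d)) : EuclideanSpace ℝ (Fin d) :=
  WithLp.toLp 2 fun i => (digit d (scaledCoords s x) i : ℝ)

lemma scaledCoords_sub (hs : 0 < s) (x y : EuclideanSpace ℝ (Fin d)) (i : Fin d) :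
    |scaledCoords s x i - scaledCoords s y i| = dist (x i) (y i) / s := by
  simp [scaledCoords, ← sub_div, abs_div, abs_of_pos hs, Real.dist_eq]

lemma abs_scaledCoords_sub_le (hs : 0 < s) (x y : EuclideanSpace ℝ (Fin d)) (n : ℕ) :
    |scaledCoords s x n - scaledCoords s y n| ≤ dist x y / s := by
  by_cases hn : n < d
  · rw [show n = (⟨n, hn⟩ : Fin d) from rfl, scaledCoords_sub hs]
    gcongr
    exact PiLp.dist_apply_le x y _
  · simp only [scaledCoords, hn, dite_false, sub_zero, abs_zero]
    positivity

lemma staircaseHash_eq_iff {x y : EuclideanSpace ℝ (Fin d)} :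
    staircaseHash s x = staircaseHash s y ↔
      ∀ m < d, digit d (scaledCoords s x) m = digit d (scaledCoords s y) m := by
  constructor
  · intro h m hm
    simpa [staircaseHash] using congrArg (fun v => v ⟨m, hm⟩) h
  · intro h
    ext i
    simp [staircaseHash, h i i.2]

lemma sum_floor_staircaseHash (x : EuclideanSpace ℝ (Fin d)) :
    ∑ i, ⌊staircaseHash s x i⌋ = partialSum d (scaledCoords s x) d := by
  simp [staircaseHash, partialSum_eq_sum_digit, Finset.sum_range]

lemma dist_le_of_staircaseHash_eq (hs : 0 < s) {x y : EuclideanSpace ℝ (Fin d)}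
    (h : staircaseHash s x = staircaseHash s y) : dist x y ≤ √d * s := by
  simpa using dist_le_sqrt_card_mul_of_forall_dist_apply_le hs.le fun i : Fin d => by
    have := abs_sub_lt_one_of_digit_eq fun m hm =>
      staircaseHash_eq_iff.mp h m (hm.trans_lt i.2)
    rw [scaledCoords_sub hs, div_lt_one hs] at this
    exact this.le

lemma image_staircaseHash_finite_and_ncard_le (hs : 0 < s) {S : Set (EuclideanSpace ℝ (Fin d))}
    (hS : ∀ x ∈ S, ∀ y ∈ S, dist x y ≤ s / (d + 1)) :
    (staircaseHash s '' S).Finite ∧ (staircaseHash s '' S).ncard ≤ d + 1 := by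
  have hsep : ∀ x ∈ S, ∀ y ∈ S,
      |partialSum d (scaledCoords s x) d - partialSum d (scaledCoords s y) d| ≤ d ∧
        (partialSum d (scaledCoords s x) d = partialSum d (scaledCoords s y) d →
          ∀ m < d, digit d (scaledCoords s x) m = digit d (scaledCoords s y) m) :=
    fun x hx y hy => partialSum_separation (fun n _ =>
      (abs_scaledCoords_sub_le hs x y n).trans <|
        (div_le_div_of_nonneg_right (hS x hx y hy) hs.le).trans_eq (by field_simp)) le_rfl
  set g : EuclideanSpace ℝ (Fin d) → ℤ := fun v => ∑ i, ⌊v i⌋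
  have hinj : Set.InjOn g (staircaseHash s '' S) := by
    rintro _ ⟨x, hx, rfl⟩ _ ⟨y, hy, rfl⟩ hg
    simp only [g, sum_floor_staircaseHash] at hg
    exact staircaseHash_eq_iff.mpr ((hsep x hx y hy).2 hg)
  obtain ⟨hfin, hcard⟩ := Set.finite_and_ncard_le_of_forall_abs_sub_le (A := g '' (staircaseHash s '' S))
    (n := d) (by
      rintro _ ⟨_, ⟨x, hx, rfl⟩, rfl⟩ _ ⟨_, ⟨y, hy, rfl⟩, rfl⟩
      simpa only [g, sum_floor_staircaseHash] using (hsep x hx y hy).1)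
  exact ⟨hfin.of_finite_image hinj, hinj.ncard_image ▸ hcard⟩

end Hash

/-- There is a universal constant `c > 0` such that for every
`d ≥ 1` and every `ℓ > 0` there is a `(c·d^{3/2}, d+1)`-hash `φ : ℝ^d → ℝ^d`
with diameter bound `ℓ`: every fiber of `φ` has Euclidean diameter at most `ℓ`,
and every `S ⊆ ℝ^d` of Euclidean diameter at most `ℓ / (c·d^{3/2})` has image
`φ(S)` of at most `d + 1` elements. -/
theorem stmt_8 :
    ∃ c : ℝ, 0 < c ∧
      ∀ (d : ℕ), 1 ≤ d → ∀ ℓ : ℝ, 0 < ℓ →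
        ∃ φ : EuclideanSpace ℝ (Fin d) → EuclideanSpace ℝ (Fin d),
          (∀ z ∈ Set.range φ, EMetric.diam (φ ⁻¹' {z}) ≤ ENNReal.ofReal ℓ) ∧
          ∀ S : Set (EuclideanSpace ℝ (Fin d)),
            EMetric.diam S ≤ ENNReal.ofReal (ℓ / (c * (d : ℝ) ^ ((3 : ℝ) / 2))) →
            (φ '' S).Finite ∧ (φ '' S).ncard ≤ d + 1 := by
  refine ⟨2, two_pos, fun d hd ℓ hℓ => ?_⟩
  have hd₀ : (0 : ℝ) < d := by exact_mod_cast hd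
  have hsqrt : 0 < √(d : ℝ) := Real.sqrt_pos.mpr hd₀
  have hs : 0 < ℓ / √d := div_pos hℓ hsqrt
  refine ⟨staircaseHash (ℓ / √d), ?_, fun S hS => image_staircaseHash_finite_and_ncard_le hs ?_⟩
  · rintro _ ⟨x₀, rfl⟩
    refine Metric.ediam_le fun x hx y hy => (edist_le_ofReal hℓ.le).mpr ?_
    have := dist_le_of_staircaseHash_eq hs (hx.trans hy.symm)
    rwa [mul_div_cancel₀ _ hsqrt.ne'] at this
  · have hradius : ℓ / (2 * (d : ℝ) ^ ((3 : ℝ) / 2)) ≤ ℓ / √d / (d + 1) := by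
      rw [show (3 : ℝ) / 2 = 1 + 1 / 2 by norm_num, Real.rpow_add hd₀, Real.rpow_one,
        ← Real.sqrt_eq_rpow, div_div, mul_comm (√d), ← mul_assoc]
      have : (d : ℝ) + 1 ≤ 2 * d := by linarith [(Nat.one_le_cast (α := ℝ)).mpr hd]
      gcongr
    intro x hx y hy
    exact ((edist_le_ofReal (by positivity)).mp
      ((Metric.edist_le_ediam_of_mem hx hy).trans hS)).trans hradius
end

section
/- Let d ≥ 1, let 0 ≤ i ≤ d − 1 be an integer, let ε > 0, and set l_j := (d − j)·ε for integers j. Let S₁ and S₂ be two distinct linear subspaces of ℝ^d, each spanned by exactly i vectors from the standard orthonormal basis {e₁, …, e_d}, and let I := S₁ ∩ S₂. Define S_t' := N_i^∞(S_t) \ N_{i−1}^∞(I) for t = 1, 2, where N_j^∞(A) := {x ∈ ℝ^d : ∃ a ∈ A, ‖x − a‖_∞ ≤ l_j}. Then for every x ∈ S₁' and y ∈ S₂', the Euclidean distance satisfies ‖x − y‖₂ ≥ √2 · ε. -/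
/-- The coordinate subspace of `ℝ^d` spanned by the standard basis vectors
`e_k` with `k ∈ A` (as a set): all points vanishing outside `A`. -/
def coordSubspace (d : ℕ) (A : Finset (Fin d)) : Set (EuclideanSpace ℝ (Fin d)) :=
  {x | ∀ k ∉ A, x k = 0}

/-- The `ℓ∞`-neighborhood of radius `l` of a set `S ⊆ ℝ^d`:
all `x` with `‖x − a‖_∞ ≤ l` for some `a ∈ S`. -/
def linfNbhd (d : ℕ) (l : ℝ) (S : Set (EuclideanSpace ℝ (Fin d))) :
    Set (EuclideanSpace ℝ (Fin d)) :=
  {x | ∃ a ∈ S, ∀ k, |x k - a k| ≤ l}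

/-!
A point of `N_i^∞(S₁)` that escapes `N_{i-1}^∞(S₁ ∩ S₂)` must have a coordinate `k₁ ∈ A₁ \ A₂`
with `|x k₁| > l_{i-1}`: otherwise truncating `x` to the coordinates in `A₁ ∩ A₂` would be a point
of `S₁ ∩ S₂` within `l_{i-1}` of it. Symmetrically `y` has such a coordinate `k₂ ∈ A₂ \ A₁`.
Since `y ∈ N_i^∞(S₂)` and `k₁ ∉ A₂`, `|y k₁| ≤ l_i = l_{i-1} - ε`, so `|x k₁ - y k₁| > ε`, and likewise
`|x k₂ - y k₂| > ε`. Two distinct coordinates each differing by more than `ε` give `‖x - y‖₂ ≥ √2 ε`.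
-/

theorem coordSubspace_inter (d : ℕ) (A B : Finset (Fin d)) :
    coordSubspace d A ∩ coordSubspace d B = coordSubspace d (A ∩ B) := by
  ext x
  simp only [coordSubspace, Set.mem_inter_iff, Set.mem_ofPred_eq, Finset.mem_inter, not_and_or]
  exact ⟨fun ⟨hA, hB⟩ k hk => hk.elim (hA k) (hB k), fun h => ⟨fun k hk => h k (.inl hk),
    fun k hk => h k (.inr hk)⟩⟩

theorem abs_apply_le_of_mem_linfNbhd_coordSubspace {d : ℕ} {l : ℝ} {A : Finset (Fin d)}
    {x : EuclideanSpace ℝ (Fin d)} (hx : x ∈ linfNbhd d l (coordSubspace d A)) {k : Fin d}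
    (hk : k ∉ A) : |x k| ≤ l := by
  obtain ⟨a, ha, hxa⟩ := hx
  simpa [ha k hk] using hxa k

theorem exists_lt_abs_apply_of_mem_linfNbhd_of_notMem {d : ℕ} {l r : ℝ} (hlr : l ≤ r)
    {A B : Finset (Fin d)} {x : EuclideanSpace ℝ (Fin d)}
    (hx : x ∈ linfNbhd d l (coordSubspace d A)) (hx' : x ∉ linfNbhd d r (coordSubspace d B)) :
    ∃ k ∈ A, k ∉ B ∧ r < |x k| := by
  by_contra! hsmall
  refine hx' ⟨WithLp.toLp 2 (fun k => if k ∈ B then x k else 0), fun k hk => if_neg hk,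
    fun k => ?_⟩
  by_cases hkB : k ∈ B
  · obtain ⟨a, -, hxa⟩ := hx
    simpa [hkB] using (abs_nonneg _).trans ((hxa k).trans hlr)
  · simp only [if_neg hkB, sub_zero]
    by_cases hkA : k ∈ A
    · exact hsmall k hkA hkB
    · exact (abs_apply_le_of_mem_linfNbhd_coordSubspace hx hkA).trans hlr

theorem sqrt_two_mul_le_dist_of_le_abs_sub {ι : Type*} [Fintype ι] {x y : EuclideanSpace ℝ ι}
    {k₁ k₂ : ι} (hne : k₁ ≠ k₂) {c : ℝ} (hc : 0 ≤ c) (h₁ : c ≤ |x k₁ - y k₁|)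
    (h₂ : c ≤ |x k₂ - y k₂|) : Real.sqrt 2 * c ≤ dist x y := by
  classical
  have hpair : dist (x k₁) (y k₁) ^ 2 + dist (x k₂) (y k₂) ^ 2 ≤ ∑ k, dist (x k) (y k) ^ 2 := by
    rw [← Finset.sum_pair (f := fun k => dist (x k) (y k) ^ 2) hne]
    exact Finset.sum_le_univ_sum_of_nonneg fun _ => sq_nonneg _
  calc Real.sqrt 2 * c = Real.sqrt (c ^ 2 + c ^ 2) := by
        rw [← two_mul, Real.sqrt_mul zero_le_two, Real.sqrt_sq hc]
    _ ≤ Real.sqrt (dist (x k₁) (y k₁) ^ 2 + dist (x k₂) (y k₂) ^ 2) := by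
        rw [Real.dist_eq, Real.dist_eq]
        gcongr
    _ ≤ Real.sqrt (∑ k, dist (x k) (y k) ^ 2) := Real.sqrt_le_sqrt hpair
    _ = dist x y := (EuclideanSpace.dist_eq x y).symm

theorem stmt_10_general (d : ℕ) (i : ℕ)
    (ε : ℝ) (hε : 0 < ε)
    (A₁ A₂ : Finset (Fin d))
    (x y : EuclideanSpace ℝ (Fin d))
    (hx : x ∈ linfNbhd d (((d : ℝ) - i) * ε) (coordSubspace d A₁) \
        linfNbhd d (((d : ℝ) - i + 1) * ε) (coordSubspace d A₁ ∩ coordSubspace d A₂))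
    (hy : y ∈ linfNbhd d (((d : ℝ) - i) * ε) (coordSubspace d A₂) \
        linfNbhd d (((d : ℝ) - i + 1) * ε) (coordSubspace d A₁ ∩ coordSubspace d A₂)) :
    Real.sqrt 2 * ε ≤ dist x y := by
  have hlr : ((d : ℝ) - i) * ε ≤ ((d : ℝ) - i + 1) * ε := by linarith
  rw [coordSubspace_inter] at hx hy
  obtain ⟨k₁, hk₁A₁, hk₁I, hxk₁⟩ := exists_lt_abs_apply_of_mem_linfNbhd_of_notMem hlr hx.1 hx.2
  obtain ⟨k₂, hk₂A₂, hk₂I, hyk₂⟩ := exists_lt_abs_apply_of_mem_linfNbhd_of_notMem hlr hy.1 hy.2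
  have hk₁A₂ : k₁ ∉ A₂ := fun h => hk₁I (Finset.mem_inter.2 ⟨hk₁A₁, h⟩)
  have hk₂A₁ : k₂ ∉ A₁ := fun h => hk₂I (Finset.mem_inter.2 ⟨h, hk₂A₂⟩)
  have hyk₁ := abs_apply_le_of_mem_linfNbhd_coordSubspace hy.1 hk₁A₂
  have hxk₂ := abs_apply_le_of_mem_linfNbhd_coordSubspace hx.1 hk₂A₁
  have h₁ : ε ≤ |x k₁ - y k₁| := by linarith [abs_sub_abs_le_abs_sub (x k₁) (y k₁)]
  have h₂ : ε ≤ |x k₂ - y k₂| := by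
    linarith [abs_sub_abs_le_abs_sub (y k₂) (x k₂), abs_sub_comm (x k₂) (y k₂)]
  have hk : k₁ ≠ k₂ := fun h => hk₁A₂ (h ▸ hk₂A₂)
  exact sqrt_two_mul_le_dist_of_le_abs_sub hk hε.le h₁ h₂

/-- Let `0 ≤ i ≤ d−1`, `ε > 0`, `l_j := (d−j)ε`. For two
distinct coordinate subspaces `S₁, S₂` each spanned by exactly `i` standard
basis vectors, with `I := S₁ ∩ S₂` and `S_t' := N_i^∞(S_t) \ N_{i−1}^∞(I)`,
every `x ∈ S₁'` and `y ∈ S₂'` satisfy `‖x − y‖₂ ≥ √2 · ε`. -/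
theorem stmt_10 (d : ℕ) (hd : 1 ≤ d) (i : ℕ) (hi : i ≤ d - 1)
    (ε : ℝ) (hε : 0 < ε)
    (A₁ A₂ : Finset (Fin d)) (hA₁ : A₁.card = i) (hA₂ : A₂.card = i) (hA : A₁ ≠ A₂)
    (x y : EuclideanSpace ℝ (Fin d))
    (hx : x ∈ linfNbhd d (((d : ℝ) - i) * ε) (coordSubspace d A₁) \
        linfNbhd d (((d : ℝ) - i + 1) * ε) (coordSubspace d A₁ ∩ coordSubspace d A₂))
    (hy : y ∈ linfNbhd d (((d : ℝ) - i) * ε) (coordSubspace d A₂) \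
        linfNbhd d (((d : ℝ) - i + 1) * ε) (coordSubspace d A₁ ∩ coordSubspace d A₂)) :
    Real.sqrt 2 * ε ≤ dist x y :=
  stmt_10_general d i ε hε A₁ A₂ x y hx hy
end

section
/- Let d ≥ 1, let 0 ≤ j < i ≤ d − 1 be integers, let ε > 0 and T ≥ 0, and set l_i := (d − i)·ε and l_{i−1} := (d − i + 1)·ε. Let Q₁ := [0, T]^i × {0}^{d−i}, Q := [0, T]^j × {0}^{d−j}, and let I := ℝ^j × {0}^{d−j} (the span of e₁, …, e_j). Let N_i^∞(A) denote the ℓ∞-neighborhood of A of radius l_i and N_{i−1}^∞(A) the ℓ∞-neighborhood of radius l_{i−1}. Then N_i^∞(Q₁) \ N_{i−1}^∞(Q) = N_i^∞(Q₁) \ N_{i−1}^∞(I). -/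
/-- The box `[0, T]^m × {0}^{d−m}` in `ℝ^d`. -/
def box (d : ℕ) (T : ℝ) (m : ℕ) : Set (EuclideanSpace ℝ (Fin d)) :=
  {x | (∀ k : Fin d, (k : ℕ) < m → 0 ≤ x k ∧ x k ≤ T) ∧
       ∀ k : Fin d, m ≤ (k : ℕ) → x k = 0}

/-- The coordinate subspace `ℝ^m × {0}^{d−m}`, i.e. the span of `e₁, …, e_m`. -/
def lowSubspace (d : ℕ) (m : ℕ) : Set (EuclideanSpace ℝ (Fin d)) :=
  {x | ∀ k : Fin d, m ≤ (k : ℕ) → x k = 0}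

/-!
Since `Q ⊆ I`, only `N_{l}(Q₁) ∩ N_{l'}(I) ⊆ N_{l'}(Q)` (for `l ≤ l'`) needs proof. Clamp the first
`j` coordinates of such an `x` to `[0, T]` and zero the others: a nearby point of `Q₁` has its first
`j` coordinates in `[0, T]`, so clamping moves them by at most `l`, and the remaining coordinates of
`x` are at most `l'` in absolute value because `x` is near `I`.
-/

lemma abs_sub_clamp_le {y a T : ℝ} (ha₀ : 0 ≤ a) (haT : a ≤ T) :
    |y - max 0 (min y T)| ≤ |y - a| := by
  rcases le_total y 0 with hy | hy
  · rw [min_eq_left (hy.trans (ha₀.trans haT)), max_eq_left hy, sub_zero,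
      abs_of_nonpos hy, abs_of_nonpos (by linarith)]
    linarith
  rcases le_total y T with hyT | hyT
  · simp [min_eq_left hyT, max_eq_right hy]
  · rw [min_eq_right hyT, max_eq_right (ha₀.trans haT), abs_of_nonneg (sub_nonneg.2 hyT),
      abs_of_nonneg (by linarith)]
    linarith

lemma box_subset_lowSubspace (d : ℕ) (T : ℝ) (m : ℕ) : box d T m ⊆ lowSubspace d m :=
  fun _ hx => hx.2

lemma linfNbhd_mono {d : ℕ} {l l' : ℝ} {S S' : Set (EuclideanSpace ℝ (Fin d))}
    (hl : l ≤ l') (hS : S ⊆ S') : linfNbhd d l S ⊆ linfNbhd d l' S' :=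
  fun _ ⟨a, ha, hxa⟩ => ⟨a, hS ha, fun k => (hxa k).trans hl⟩

lemma linfNbhd_box_inter_linfNbhd_lowSubspace_subset {d i j : ℕ} (hji : j ≤ i) {T l l' : ℝ}
    (hT : 0 ≤ T) (hl : l ≤ l') :
    linfNbhd d l (box d T i) ∩ linfNbhd d l' (lowSubspace d j) ⊆ linfNbhd d l' (box d T j) := by
  rintro x ⟨⟨a, ⟨ha, -⟩, hxa⟩, ⟨b, hb, hxb⟩⟩
  refine ⟨WithLp.toLp 2 fun k => if (k : ℕ) < j then max 0 (min (x k) T) else 0,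
    ⟨fun k hk => ?_, fun k hk => ?_⟩, fun k => ?_⟩
  · simpa [hk] using hT
  · simp [hk.not_gt]
  · by_cases hk : (k : ℕ) < j
    · have ha' := ha k (hk.trans_le hji)
      simpa [hk] using (abs_sub_clamp_le ha'.1 ha'.2).trans ((hxa k).trans hl)
    · simpa [hk, hb k (not_lt.mp hk)] using hxb k

theorem stmt_11_general (d : ℕ) (i j : ℕ) (hj : j < i)
    (ε T : ℝ) (hε : 0 < ε) (hT : 0 ≤ T) :
    linfNbhd d (((d : ℝ) - i) * ε) (box d T i) \
        linfNbhd d (((d : ℝ) - i + 1) * ε) (box d T j) =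
      linfNbhd d (((d : ℝ) - i) * ε) (box d T i) \
        linfNbhd d (((d : ℝ) - i + 1) * ε) (lowSubspace d j) := by
  have hl : ((d : ℝ) - i) * ε ≤ ((d : ℝ) - i + 1) * ε := by rw [add_one_mul]; linarith
  refine Set.Subset.antisymm (fun x ⟨hx₁, hxQ⟩ => ⟨hx₁, fun hxI => hxQ ?_⟩)
    (Set.sdiff_subset_sdiff_right (linfNbhd_mono le_rfl (box_subset_lowSubspace d T j)))
  exact linfNbhd_box_inter_linfNbhd_lowSubspace_subset hj.le hT hl ⟨hx₁, hxI⟩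

/-- Let `0 ≤ j < i ≤ d−1`, `ε > 0`, `T ≥ 0`,
`l_i := (d−i)ε`, `l_{i−1} := (d−i+1)ε`, `Q₁ := [0,T]^i × {0}^{d−i}`,
`Q := [0,T]^j × {0}^{d−j}`, and `I := ℝ^j × {0}^{d−j}`. Then
`N_i^∞(Q₁) \ N_{i−1}^∞(Q) = N_i^∞(Q₁) \ N_{i−1}^∞(I)`. -/
theorem stmt_11 (d : ℕ) (hd : 1 ≤ d) (i j : ℕ) (hj : j < i) (hi : i ≤ d - 1)
    (ε T : ℝ) (hε : 0 < ε) (hT : 0 ≤ T) :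
    linfNbhd d (((d : ℝ) - i) * ε) (box d T i) \
        linfNbhd d (((d : ℝ) - i + 1) * ε) (box d T j) =
      linfNbhd d (((d : ℝ) - i) * ε) (box d T i) \
        linfNbhd d (((d : ℝ) - i + 1) * ε) (lowSubspace d j) :=
  stmt_11_general d i j hj ε T hε hT
end

section
/- Let d ≥ 1, ε > 0, and T > (2d + 1)·ε. Partition ℝ^d into axis-parallel hypercubes of side length T with corners in T·ℤ^d. For 0 ≤ i ≤ d − 1, let 𝒜_i denote the union of all i-dimensional faces of these hypercubes (a face is obtained by fixing d − i coordinates at integer multiples of T and letting each remaining coordinate range over an interval [T·a, T·(a+1)] with a ∈ ℤ), set l_j := (d − j)·ε, let N_j^∞(A) be the ℓ∞-neighborhood of A of radius l_j, and let B_{≤ m} := ⋃_{j ≤ m} N_j^∞(𝒜_j) (with B_{≤ −1} := ∅). Then for every integer 0 ≤ i ≤ d − 1 and every two distinct i-dimensional faces Q₁ and Q₂ of the hypercubes, the Euclidean distance between N_i^∞(Q₁) \ B_{≤ i−1} and N_i^∞(Q₂) \ B_{≤ i−1} is strictly greater than ε. -/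
/-- The `i`-dimensional face of the grid of hypercubes of side `T` determined
by the set `A` of free coordinates (`|A| = i`) and the base corner `T·z`:
coordinates in `A` range over `[T·z_k, T·z_k + T]`, the others are fixed. -/
def face (d : ℕ) (T : ℝ) (A : Finset (Fin d)) (z : Fin d → ℤ) :
    Set (EuclideanSpace ℝ (Fin d)) :=
  {x | (∀ k ∈ A, T * (z k : ℝ) ≤ x k ∧ x k ≤ T * (z k : ℝ) + T) ∧
       ∀ k ∉ A, x k = T * (z k : ℝ)}

/-- `𝒜_j`: the union of all `j`-dimensional faces of the grid hypercubes. -/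
def gridFaces (d : ℕ) (T : ℝ) (j : ℕ) : Set (EuclideanSpace ℝ (Fin d)) :=
  {x | ∃ A : Finset (Fin d), ∃ z : Fin d → ℤ, A.card = j ∧ x ∈ face d T A z}

/-- The `ℓ∞`-neighborhood of radius `l_j := (d−j)·ε` of a set `S ⊆ ℝ^d`. -/
def linfNbhdLevel (d : ℕ) (ε : ℝ) (j : ℕ) (S : Set (EuclideanSpace ℝ (Fin d))) :
    Set (EuclideanSpace ℝ (Fin d)) :=
  {x | ∃ a ∈ S, ∀ k, |x k - a k| ≤ ((d : ℝ) - j) * ε}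

/-- `B_{≤ i−1} = ⋃_{j ≤ i−1} N_j^∞(𝒜_j)` (empty for `i = 0`). -/
def Blt (d : ℕ) (T ε : ℝ) (i : ℕ) : Set (EuclideanSpace ℝ (Fin d)) :=
  {x | ∃ j < i, x ∈ linfNbhdLevel d ε j (gridFaces d T j)}

/-- The Euclidean distance between two sets. -/
noncomputable def setDist {α : Type*} [PseudoMetricSpace α] (A B : Set α) : ℝ :=
  sInf {r : ℝ | ∃ a ∈ A, ∃ b ∈ B, r = dist a b}

/-!
A point `x` of `N_i^∞(Q) \ B_{≤ i−1}`, for an `i`-face `Q`, stays more than `l_i + ε` away from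
every multiple of `T` in each free coordinate `k` of `Q`: otherwise pinning coordinate `k` of a
nearby point of `Q` to that multiple of `T` gives an `(i−1)`-face within `l_i + ε = l_{i−1}` of `x`.
In the fixed coordinates `x` stays within `l_i` of the grid value of `Q`.

Two distinct `i`-faces either have the same free coordinates, and then differ in one coordinate
`k`, where the above gives a gap `≥ 2ε` (`k` free) or `≥ T − 2 l_i` (`k` fixed), or else each has
a free coordinate that is fixed for the other, which gives gaps `> ε` in two coordinates and hence
Euclidean distance `≥ √2 ε`. Both `√2 ε` and `T − 2 l_i` exceed `ε`, and the sets are nonempty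
since they contain the centre of their face.
-/

open Finset

lemma le_setDist {α : Type*} [PseudoMetricSpace α] {A B : Set α} {c : ℝ}
    (hA : A.Nonempty) (hB : B.Nonempty) (h : ∀ a ∈ A, ∀ b ∈ B, c ≤ dist a b) :
    c ≤ setDist A B := by
  obtain ⟨a, ha⟩ := hA
  obtain ⟨b, hb⟩ := hB
  refine le_csInf ⟨_, a, ha, b, hb, rfl⟩ ?_
  rintro r ⟨a, ha, b, hb, rfl⟩
  exact h a ha b hb

lemma EuclideanSpace.abs_sub_apply_le_dist {ι : Type*} [Fintype ι] (x y : EuclideanSpace ℝ ι)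
    (k : ι) : |x k - y k| ≤ dist x y := by
  simpa only [Real.dist_eq] using PiLp.dist_apply_le x y k

lemma EuclideanSpace.sqrt_two_mul_le_dist {ι : Type*} [Fintype ι] {x y : EuclideanSpace ℝ ι}
    {k k' : ι} (hkk' : k ≠ k') {r : ℝ} (hr : 0 ≤ r) (hk : r ≤ |x k - y k|)
    (hk' : r ≤ |x k' - y k'|) : √2 * r ≤ dist x y := by
  have hsq : 2 * r ^ 2 ≤ dist x y ^ 2 := by
    rw [PiLp.dist_sq_eq_of_L2]
    calc 2 * r ^ 2 = r ^ 2 + r ^ 2 := by ring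
      _ ≤ dist (x k) (y k) ^ 2 + dist (x k') (y k') ^ 2 := by
          rw [Real.dist_eq, Real.dist_eq]
          gcongr
      _ ≤ ∑ j, dist (x j) (y j) ^ 2 :=
          add_le_sum (f := fun j => dist (x j) (y j) ^ 2) (fun j _ => sq_nonneg _)
            (mem_univ k) (mem_univ k') hkk'
  calc √2 * r = √(2 * r ^ 2) := by rw [Real.sqrt_mul zero_le_two, Real.sqrt_sq hr]
    _ ≤ √(dist x y ^ 2) := Real.sqrt_le_sqrt hsq
    _ = dist x y := Real.sqrt_sq dist_nonneg

lemma le_abs_mul_intCast_sub {T : ℝ} (hT : 0 ≤ T) {m n : ℤ} (hmn : m ≠ n) :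
    T ≤ |T * m - T * n| := by
  have h : (1 : ℝ) ≤ |(m : ℝ) - n| := by exact_mod_cast Int.one_le_abs (sub_ne_zero.2 hmn)
  rw [← mul_sub, abs_mul, abs_of_nonneg hT]
  nlinarith

lemma half_le_abs_mul_intCast_add_half_sub {T : ℝ} (hT : 0 ≤ T) (m n : ℤ) :
    T / 2 ≤ |T * m + T / 2 - T * n| := by
  have h : (1 : ℝ) ≤ |((2 * (m - n) + 1 : ℤ) : ℝ)| := by
    exact_mod_cast Int.one_le_abs (by omega)
  calc T / 2 = |T / 2| * 1 := by rw [abs_of_nonneg (by positivity : 0 ≤ T / 2), mul_one]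
    _ ≤ |T / 2| * |((2 * (m - n) + 1 : ℤ) : ℝ)| := by gcongr
    _ = |T * m + T / 2 - T * n| := by rw [← abs_mul]; push_cast; ring_nf

lemma sub_card_mul_nonneg {d : ℕ} {ε : ℝ} (hε : 0 ≤ ε) (A : Finset (Fin d)) :
    0 ≤ ((d : ℝ) - A.card) * ε := by
  have : A.card ≤ d := (card_le_univ A).trans_eq (Fintype.card_fin d)
  exact mul_nonneg (sub_nonneg.2 (by exact_mod_cast this)) hε

section GridFaces

variable {d : ℕ} {T ε : ℝ} {i : ℕ} {A A₁ A₂ : Finset (Fin d)} {z z₁ z₂ : Fin d → ℤ}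
  {x y : EuclideanSpace ℝ (Fin d)} {k : Fin d}

lemma abs_sub_le_of_mem_linfNbhdLevel_face (hx : x ∈ linfNbhdLevel d ε i (face d T A z))
    (hk : k ∉ A) : |x k - T * z k| ≤ ((d : ℝ) - i) * ε := by
  obtain ⟨a, ⟨-, ha⟩, hxa⟩ := hx
  simpa only [ha k hk] using hxa k

lemma mem_Icc_of_mem_linfNbhdLevel_face (hx : x ∈ linfNbhdLevel d ε i (face d T A z))
    (hk : k ∈ A) :
    x k ∈ Set.Icc (T * z k - ((d : ℝ) - i) * ε) (T * z k + T + ((d : ℝ) - i) * ε) := by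
  obtain ⟨a, ⟨ha, -⟩, hxa⟩ := hx
  have hxa := abs_le.1 (hxa k)
  have ha := ha k hk
  constructor <;> linarith

lemma mem_Blt_of_abs_sub_le (hε : 0 ≤ ε) (hA : A.card = i)
    (hx : x ∈ linfNbhdLevel d ε i (face d T A z)) (hk : k ∈ A) (m : ℤ)
    (hxm : |x k - T * m| ≤ ((d : ℝ) - i) * ε + ε) : x ∈ Blt d T ε i := by
  obtain ⟨a, ⟨haA, haAc⟩, hxa⟩ := hx
  have hi : 1 ≤ i := hA ▸ card_pos.2 ⟨k, hk⟩
  refine ⟨i - 1, by omega, WithLp.toLp 2 (Function.update a.ofLp k (T * m)),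
    ⟨A.erase k, Function.update z k m, by rw [card_erase_of_mem hk, hA], ?_, ?_⟩, ?_⟩
  · intro k' hk'
    obtain ⟨hk'k, hk'A⟩ := mem_erase.1 hk'
    simpa [hk'k] using haA k' hk'A
  · intro k' hk'
    by_cases hk'k : k' = k
    · subst hk'k
      simp
    · simp [hk'k, haAc k' (by simpa [hk'k] using hk')]
  · intro k'
    have hl : ((d : ℝ) - (i - 1 : ℕ)) * ε = ((d : ℝ) - i) * ε + ε := by
      push_cast [hi]
      ring
    rw [hl]
    by_cases hk'k : k' = k
    · subst hk'k
      simpa using hxm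
    · simp only [Function.update_of_ne hk'k]
      linarith [hxa k']

lemma lt_abs_sub_of_mem_diff_Blt (hε : 0 ≤ ε) (hA : A.card = i)
    (hx : x ∈ linfNbhdLevel d ε i (face d T A z) \ Blt d T ε i) (hk : k ∈ A) (m : ℤ) :
    ((d : ℝ) - i) * ε + ε < |x k - T * m| :=
  lt_of_not_ge fun hxm => hx.2 (mem_Blt_of_abs_sub_le hε hA hx.1 hk m hxm)

lemma mem_Ioo_of_mem_diff_Blt (hε : 0 ≤ ε) (hA : A.card = i)
    (hx : x ∈ linfNbhdLevel d ε i (face d T A z) \ Blt d T ε i) (hk : k ∈ A) :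
    x k ∈ Set.Ioo (T * z k + ((d : ℝ) - i) * ε + ε) (T * z k + T - ((d : ℝ) - i) * ε - ε) := by
  obtain ⟨hlo, hhi⟩ := mem_Icc_of_mem_linfNbhdLevel_face hx.1 hk
  have hbot := lt_abs_sub_of_mem_diff_Blt hε hA hx hk (z k)
  have htop := lt_abs_sub_of_mem_diff_Blt hε hA hx hk (z k + 1)
  rw [Int.cast_add, Int.cast_one, mul_add, mul_one] at htop
  constructor
  · rcases lt_abs.1 hbot with h | h <;> linarith
  · rcases lt_abs.1 htop with h | h <;> linarith

lemma two_mul_le_abs_sub_of_free_ne (hε : 0 ≤ ε) (hT : 0 ≤ T) (hA : A.card = i)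
    (hx : x ∈ linfNbhdLevel d ε i (face d T A z₁) \ Blt d T ε i)
    (hy : y ∈ linfNbhdLevel d ε i (face d T A z₂) \ Blt d T ε i)
    (hk : k ∈ A) (hz : z₁ k ≠ z₂ k) : 2 * ε ≤ |x k - y k| := by
  obtain ⟨hx₁, hx₂⟩ := mem_Ioo_of_mem_diff_Blt hε hA hx hk
  obtain ⟨hy₁, hy₂⟩ := mem_Ioo_of_mem_diff_Blt hε hA hy hk
  have hl := hA ▸ sub_card_mul_nonneg hε A
  rcases hz.lt_or_gt with h | h
  · have h' : T * z₁ k + T ≤ T * z₂ k := by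
      have : (z₁ k : ℝ) + 1 ≤ z₂ k := by exact_mod_cast h
      nlinarith
    rw [abs_sub_comm]
    exact le_abs.2 (Or.inl (by linarith))
  · have h' : T * z₂ k + T ≤ T * z₁ k := by
      have : (z₂ k : ℝ) + 1 ≤ z₁ k := by exact_mod_cast h
      nlinarith
    exact le_abs.2 (Or.inl (by linarith))

lemma sub_two_mul_le_abs_sub_of_fixed_ne (hT : 0 ≤ T)
    (hx : x ∈ linfNbhdLevel d ε i (face d T A z₁))
    (hy : y ∈ linfNbhdLevel d ε i (face d T A z₂))
    (hk : k ∉ A) (hz : z₁ k ≠ z₂ k) : T - 2 * (((d : ℝ) - i) * ε) ≤ |x k - y k| := by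
  have hgap := le_abs_mul_intCast_sub hT hz
  have hx' := abs_sub_le_of_mem_linfNbhdLevel_face hx hk
  have hy' := abs_sub_le_of_mem_linfNbhdLevel_face hy hk
  have h₁ := abs_sub_le (T * z₁ k) (x k) (T * z₂ k)
  have h₂ := abs_sub_le (x k) (y k) (T * z₂ k)
  linarith [abs_sub_comm (x k) (T * z₁ k)]

lemma lt_abs_sub_of_mem_sdiff (hε : 0 ≤ ε) (hA₁ : A₁.card = i)
    (hx : x ∈ linfNbhdLevel d ε i (face d T A₁ z₁) \ Blt d T ε i)
    (hy : y ∈ linfNbhdLevel d ε i (face d T A₂ z₂))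
    (hk₁ : k ∈ A₁) (hk₂ : k ∉ A₂) : ε < |x k - y k| := by
  have hx' := lt_abs_sub_of_mem_diff_Blt hε hA₁ hx hk₁ (z₂ k)
  have hy' := abs_sub_le_of_mem_linfNbhdLevel_face hy hk₂
  linarith [abs_sub_le (x k) (y k) (T * z₂ k)]

lemma min_le_dist_of_face_ne (hε : 0 ≤ ε) (hT : 0 ≤ T) (hA₁ : A₁.card = i)
    (hA₂ : A₂.card = i) (hne : face d T A₁ z₁ ≠ face d T A₂ z₂)
    (hx : x ∈ linfNbhdLevel d ε i (face d T A₁ z₁) \ Blt d T ε i)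
    (hy : y ∈ linfNbhdLevel d ε i (face d T A₂ z₂) \ Blt d T ε i) :
    min (√2 * ε) (T - 2 * (((d : ℝ) - i) * ε)) ≤ dist x y := by
  by_cases hA : A₁ = A₂
  · subst hA
    obtain ⟨k, hk⟩ : ∃ k, z₁ k ≠ z₂ k := by
      by_contra! h
      exact hne (by rw [funext h])
    by_cases hkA : k ∈ A₁
    · calc min (√2 * ε) (T - 2 * (((d : ℝ) - i) * ε)) ≤ √2 * ε := min_le_left _ _
        _ ≤ 2 * ε := by
          gcongr
          exact (Real.sqrt_le_left zero_le_two).2 (by norm_num)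
        _ ≤ |x k - y k| := two_mul_le_abs_sub_of_free_ne hε hT hA₁ hx hy hkA hk
        _ ≤ dist x y := EuclideanSpace.abs_sub_apply_le_dist x y k
    · calc min (√2 * ε) (T - 2 * (((d : ℝ) - i) * ε)) ≤ T - 2 * (((d : ℝ) - i) * ε) :=
            min_le_right _ _
        _ ≤ |x k - y k| := sub_two_mul_le_abs_sub_of_fixed_ne hT hx.1 hy.1 hkA hk
        _ ≤ dist x y := EuclideanSpace.abs_sub_apply_le_dist x y k
  · obtain ⟨k, hk₁, hk₂⟩ := not_subset.1 fun h => hA (eq_of_subset_of_card_le h (by omega))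
    obtain ⟨k', hk'₂, hk'₁⟩ := not_subset.1 fun h => hA (eq_of_subset_of_card_le h (by omega)).symm
    refine (min_le_left _ _).trans (EuclideanSpace.sqrt_two_mul_le_dist
      (ne_of_mem_of_not_mem hk₁ hk'₁) hε (lt_abs_sub_of_mem_sdiff hε hA₁ hx hy.1 hk₁ hk₂).le ?_)
    rw [abs_sub_comm]
    exact (lt_abs_sub_of_mem_sdiff hε hA₂ hy hx.1 hk'₂ hk'₁).le

noncomputable def faceCenter (d : ℕ) (T : ℝ) (A : Finset (Fin d)) (z : Fin d → ℤ) :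
    EuclideanSpace ℝ (Fin d) :=
  WithLp.toLp 2 fun k => T * z k + if k ∈ A then T / 2 else 0

lemma faceCenter_mem_face (hT : 0 ≤ T) : faceCenter d T A z ∈ face d T A z := by
  refine ⟨fun k hk => ?_, fun k hk => by simp [faceCenter, hk]⟩
  simp only [faceCenter, PiLp.toLp_apply, hk, if_true]
  constructor <;> linarith

lemma faceCenter_notMem_Blt (hε : 0 ≤ ε) (hT : 2 * d * ε < T) (hA : A.card = i) :
    faceCenter d T A z ∉ Blt d T ε i := by
  rintro ⟨j, hj, a, ⟨A', z', hA', -, ha⟩, hca⟩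
  obtain ⟨k, hkA, hkA'⟩ : ∃ k ∈ A, k ∉ A' :=
    not_subset.1 fun h => by have := card_le_card h; omega
  have hfar := half_le_abs_mul_intCast_add_half_sub (by nlinarith [(d.cast_nonneg : (0 : ℝ) ≤ d)])
    (z k) (z' k)
  have hnear : |T * z k + T / 2 - T * z' k| ≤ ((d : ℝ) - j) * ε := by
    simpa [faceCenter, hkA, ha k hkA'] using hca k
  nlinarith [(j.cast_nonneg : (0 : ℝ) ≤ j)]

lemma faceCenter_mem_diff_Blt (hε : 0 ≤ ε) (hT : 2 * d * ε < T) (hA : A.card = i) :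
    faceCenter d T A z ∈ linfNbhdLevel d ε i (face d T A z) \ Blt d T ε i := by
  refine ⟨⟨_, faceCenter_mem_face (by nlinarith [(d.cast_nonneg : (0 : ℝ) ≤ d)]), fun k => ?_⟩,
    faceCenter_notMem_Blt hε hT hA⟩
  simpa [← hA] using sub_card_mul_nonneg hε A

end GridFaces

theorem stmt_12_general (d : ℕ) (ε T : ℝ) (hε : 0 < ε)
    (hT : (2 * (d : ℝ) + 1) * ε < T)
    (i : ℕ)
    (A₁ A₂ : Finset (Fin d)) (z₁ z₂ : Fin d → ℤ)
    (hA₁ : A₁.card = i) (hA₂ : A₂.card = i)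
    (hne : face d T A₁ z₁ ≠ face d T A₂ z₂) :
    ε < setDist
        (linfNbhdLevel d ε i (face d T A₁ z₁) \ Blt d T ε i)
        (linfNbhdLevel d ε i (face d T A₂ z₂) \ Blt d T ε i) := by
  have hT' : 2 * d * ε < T := by linarith
  have hT₀ : 0 ≤ T := by nlinarith [(d.cast_nonneg : (0 : ℝ) ≤ d)]
  calc ε < min (√2 * ε) (T - 2 * (((d : ℝ) - i) * ε)) :=
        lt_min (lt_mul_of_one_lt_left hε Real.one_lt_sqrt_two)
          (by nlinarith [(i.cast_nonneg : (0 : ℝ) ≤ i)])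
    _ ≤ _ := le_setDist ⟨_, faceCenter_mem_diff_Blt hε.le hT' hA₁⟩
        ⟨_, faceCenter_mem_diff_Blt hε.le hT' hA₂⟩
        fun x hx y hy => min_le_dist_of_face_ne hε.le hT₀ hA₁ hA₂ hne hx hy

/-- Let `d ≥ 1`, `ε > 0`, `T > (2d+1)·ε`, and `0 ≤ i ≤ d−1`.
For every two distinct `i`-dimensional faces `Q₁, Q₂` of the grid of hypercubes
of side `T`, the Euclidean distance between `N_i^∞(Q₁) \ B_{≤ i−1}` and
`N_i^∞(Q₂) \ B_{≤ i−1}` is strictly greater than `ε`. -/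
theorem stmt_12 (d : ℕ) (hd : 1 ≤ d) (ε T : ℝ) (hε : 0 < ε)
    (hT : (2 * (d : ℝ) + 1) * ε < T)
    (i : ℕ) (hi : i ≤ d - 1)
    (A₁ A₂ : Finset (Fin d)) (z₁ z₂ : Fin d → ℤ)
    (hA₁ : A₁.card = i) (hA₂ : A₂.card = i)
    (hne : face d T A₁ z₁ ≠ face d T A₂ z₂) :
    ε < setDist
        (linfNbhdLevel d ε i (face d T A₁ z₁) \ Blt d T ε i)
        (linfNbhdLevel d ε i (face d T A₂ z₂) \ Blt d T ε i) :=
  stmt_12_general d ε T hε hT i A₁ A₂ z₁ z₂ hA₁ hA₂ hne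
end

section
/- Let k ≥ 1 and D ≥ 1, and let v₁, …, v_k ∈ ℝ^D be vectors with entries in {0, 1}, with pairwise disjoint supports, each having exactly 4 coordinates equal to 1. Then for every y ∈ ℝ^D, ∑_{i=1}^{k} ‖y − v_i‖₂ ≥ 2k·√(1 − 1/k), and equality holds when y is the centroid (1/k)·∑_{i=1}^{k} v_i; in particular each ‖(1/k)∑_j v_j − v_i‖₂ = 2·√(1 − 1/k). -/
open Finset RealInnerProductSpace

/-- Let `v₁, …, v_k ∈ ℝ^D` be 0/1 vectors with pairwise
disjoint supports, each with exactly 4 coordinates equal to 1. Then for every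
`y ∈ ℝ^D`, `∑ i ‖y − vᵢ‖ ≥ 2k·√(1 − 1/k)`, with equality at the centroid
`(1/k)·∑ v_j`; in particular `‖(1/k)∑ v_j − vᵢ‖ = 2·√(1 − 1/k)` for each `i`. -/
theorem stmt_15 (k D : ℕ) (hk : 1 ≤ k) (hD : 1 ≤ D)
    (v : Fin k → EuclideanSpace ℝ (Fin D))
    (h01 : ∀ i t, v i t = 0 ∨ v i t = 1)
    (hdisj : ∀ i j, i ≠ j → ∀ t, v i t = 0 ∨ v j t = 0)
    (h4 : ∀ i, (Finset.univ.filter (fun t => v i t = 1)).card = 4) :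
    (∀ y : EuclideanSpace ℝ (Fin D),
        2 * k * Real.sqrt (1 - 1 / (k : ℝ)) ≤ ∑ i, ‖y - v i‖) ∧
    (∑ i, ‖((k : ℝ)⁻¹ • ∑ j, v j) - v i‖ = 2 * k * Real.sqrt (1 - 1 / (k : ℝ))) ∧
    (∀ i, ‖((k : ℝ)⁻¹ • ∑ j, v j) - v i‖ = 2 * Real.sqrt (1 - 1 / (k : ℝ))) := by
  have hk0 : (0:ℝ) < (k:ℝ) := by exact_mod_cast hk
  have hinner : ∀ i j, ⟪v i, v j⟫ = if i = j then (4:ℝ) else 0 := by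
    intro i j
    simp only [PiLp.inner_apply, RCLike.inner_apply, conj_trivial]
    by_cases h : i = j
    · subst h
      simp only [if_pos rfl]
      have h1 : ∀ t, v i t * v i t = if v i t = 1 then (1:ℝ) else 0 := by
        intro t; rcases h01 i t with h'|h' <;> simp [h']
      rw [Finset.sum_congr rfl (fun t _ => h1 t), Finset.sum_boole]
      rw [h4 i]; norm_num
    · rw [if_neg h]
      refine Finset.sum_eq_zero fun t _ => ?_
      rcases hdisj i j h t with h'|h' <;> simp [h']
  set c : EuclideanSpace ℝ (Fin D) := (k:ℝ)⁻¹ • ∑ j, v j with hc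
  have hvc : ∀ i, ⟪v i, c⟫ = 4 / k := by
    intro i
    rw [hc, real_inner_smul_right, inner_sum]
    rw [Finset.sum_congr rfl (fun j _ => hinner i j)]
    simp [div_eq_inv_mul]
  have hcc : ⟪c, c⟫ = 4 / k := by
    rw [hc, real_inner_smul_left, real_inner_smul_right, sum_inner]
    have h2 : ∑ j : Fin k, ⟪v j, ∑ l, v l⟫ = (4:ℝ) * k := by
      have h3 : ∀ j : Fin k, ⟪v j, ∑ l, v l⟫ = (4:ℝ) := by
        intro j
        rw [inner_sum, Finset.sum_congr rfl (fun l _ => hinner j l)]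
        simp
      rw [Finset.sum_congr rfl (fun j _ => h3 j)]
      simp [mul_comm]
    rw [h2]
    field_simp
  have hsq : ∀ i, ‖c - v i‖ ^ 2 = 4 - 4 / k := by
    intro i
    rw [← real_inner_self_eq_norm_sq, inner_sub_sub_self, hcc, hvc,
      real_inner_comm (v i) c, hvc, hinner]
    simp
    ring
  have hnn : (0:ℝ) ≤ 1 - 1 / (k:ℝ) := by
    have : 1 / (k:ℝ) ≤ 1 := by
      rw [div_le_one hk0]; exact_mod_cast hk
    linarith
  have hr : ∀ i, ‖c - v i‖ = 2 * Real.sqrt (1 - 1 / (k:ℝ)) := by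
    intro i
    have h2 : ‖c - v i‖ = Real.sqrt (4 - 4 / k) := by
      rw [← hsq i, Real.sqrt_sq (norm_nonneg _)]
    rw [h2]
    have h3 : (4:ℝ) - 4 / k = 2^2 * (1 - 1/k) := by ring
    rw [h3, Real.sqrt_mul (by positivity), Real.sqrt_sq (by norm_num)]
  refine ⟨?_, ?_, hr⟩
  · intro y
    set r := 2 * Real.sqrt (1 - 1 / (k:ℝ)) with hrdef
    have hrnn : 0 ≤ r := by positivity
    have hr2 : r ^ 2 = 4 - 4 / k := by
      rw [hrdef, mul_pow, Real.sq_sqrt hnn]; ring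
    have hcy : ⟪c, y⟫ = (k:ℝ)⁻¹ * ∑ j, ⟪v j, y⟫ := by
      rw [hc, real_inner_smul_left, sum_inner]
    have expand : ∀ i, ⟪v i - c, v i - y⟫ = 4 - ⟪v i, y⟫ - 4 / k + ⟪c, y⟫ := by
      intro i
      have hcv : ⟪c, v i⟫ = 4 / k := by rw [real_inner_comm]; exact hvc i
      rw [inner_sub_left, inner_sub_right, inner_sub_right, hcv, hinner]
      simp
      ring
    have hsum : ∑ i, ⟪v i - c, v i - y⟫ = 4 * k - 4 := by
      rw [Finset.sum_congr rfl (fun i _ => expand i)]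
      simp only [Finset.sum_add_distrib, Finset.sum_sub_distrib, Finset.sum_const,
        Finset.card_univ, Fintype.card_fin, nsmul_eq_mul, hcy]
      field_simp
      ring
    have hCS : ∀ i, ⟪v i - c, v i - y⟫ ≤ r * ‖y - v i‖ := by
      intro i
      calc ⟪v i - c, v i - y⟫ ≤ ‖v i - c‖ * ‖v i - y‖ := real_inner_le_norm _ _
        _ = r * ‖y - v i‖ := by rw [norm_sub_rev (v i) c, hr i, norm_sub_rev (v i) y]
    have hS : 4 * (k:ℝ) - 4 ≤ r * ∑ i, ‖y - v i‖ := by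
      rw [Finset.mul_sum, ← hsum]
      exact Finset.sum_le_sum fun i _ => hCS i
    have hgoal : 2 * (k:ℝ) * Real.sqrt (1 - 1 / (k:ℝ)) = k * r := by
      rw [hrdef]; ring
    rw [hgoal]
    rcases eq_or_lt_of_le hrnn with h0 | h0
    · rw [← h0, mul_zero]
      exact Finset.sum_nonneg fun i _ => norm_nonneg _
    · have hk4 : (k:ℝ) * r * r = 4 * k - 4 := by
        have : (k:ℝ) * (r^2) = k * (4 - 4/k) := by rw [hr2]
        have h5 : (k:ℝ) * (4 - 4/k) = 4 * k - 4 := by field_simp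
        nlinarith
      have h7 : r * ((k:ℝ) * r) ≤ r * ∑ i, ‖y - v i‖ := by nlinarith [hS, hk4]
      exact le_of_mul_le_mul_left h7 h0
  · rw [Finset.sum_congr rfl (fun i _ => hr i)]
    simp [mul_comm, mul_assoc, mul_left_comm]
end
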